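/- arXiv:0709.1788 — 2 statements merged into one kernel-verified Lean document; each statement's English description precedes it below -/
import Mathlib

section
/- For any complex x and 0 < q < 1, S_q(x) = -(q(1-x)/(1-q))·∫_0^1 G_q(qx, qt) d_q t, where the q-integral is ∫_0^1 f(t) d_q t = (1-q)∑_{k=0}^∞ f(q^k) q^k and G_q(x,t) = ∑_{k=0}^∞ t^k (x;q)_k. -/
noncomputable def qPoch (q x : ℂ) (k : ℕ) : ℂ := ∏ j ∈ Finset.range k, (1 - x * q ^ j)

noncomputable def Sq (q : ℝ) (x : ℂ) : ℂ :=
  -∑' k : ℕ, ((q : ℂ) ^ (k + 1) / (1 - (q : ℂ) ^ (k + 1))) * qPoch q x (k + 1)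

noncomputable def Gq (q : ℝ) (x t : ℂ) : ℂ := ∑' k : ℕ, t ^ k * qPoch q x k

/-- Jackson q-integral of f over [0,1]. -/
noncomputable def jacksonIntegral (q : ℝ) (f : ℂ → ℂ) : ℂ :=
  (1 - (q : ℂ)) * ∑' k : ℕ, f ((q : ℂ) ^ k) * (q : ℂ) ^ k

/-!
Expanding `G_q` as a power series turns the Jackson integral into a double series
`∑ₖ qᵏ ∑ₙ q^((k+1)n) (qx;q)ₙ`. For `|q| < 1` the q-Pochhammer symbols are bounded, so the series
converges absolutely and may be summed over the Jackson nodes first, where it is geometric: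
`∑ₖ qᵏ q^((k+1)n) = qⁿ / (1 - q^(n+1))`. The factor `1 - x` then recombines with `(qx;q)ₙ`
into `(x;q)ₙ₊₁`.
-/

lemma qPoch_succ (q x : ℂ) (n : ℕ) : qPoch q x (n + 1) = (1 - x) * qPoch q (q * x) n := by
  rw [qPoch, Finset.prod_range_succ', pow_zero, mul_one, mul_comm, qPoch]
  congr 1
  exact Finset.prod_congr rfl fun j _ => by ring

lemma norm_qPoch_le {q : ℂ} (hq : ‖q‖ < 1) (x : ℂ) (n : ℕ) :
    ‖qPoch q x n‖ ≤ Real.exp (‖x‖ / (1 - ‖q‖)) :=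
  calc ‖qPoch q x n‖ ≤ ∏ j ∈ Finset.range n, ‖1 - x * q ^ j‖ := Finset.norm_prod_le _ _
    _ ≤ ∏ j ∈ Finset.range n, Real.exp (‖x‖ * ‖q‖ ^ j) := by
        gcongr with j
        calc ‖1 - x * q ^ j‖ ≤ 1 + ‖x‖ * ‖q‖ ^ j := by
              simpa [norm_mul, norm_pow] using norm_sub_le (1 : ℂ) (x * q ^ j)
          _ ≤ Real.exp (‖x‖ * ‖q‖ ^ j) := by linarith [Real.add_one_le_exp (‖x‖ * ‖q‖ ^ j)]
    _ = Real.exp (‖x‖ * ∑ j ∈ Finset.range n, ‖q‖ ^ j) := by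
        rw [← Real.exp_sum, Finset.mul_sum]
    _ ≤ Real.exp (‖x‖ / (1 - ‖q‖)) := by
        rw [div_eq_mul_inv, ← tsum_geometric_of_lt_one (norm_nonneg q) hq]
        gcongr
        exact (summable_geometric_of_lt_one (norm_nonneg q) hq).sum_le_tsum _
          fun j _ => pow_nonneg (norm_nonneg q) j

lemma tsum_pow_mul_tsum_pow_succ_mul {q : ℂ} (hq : ‖q‖ < 1) {a : ℕ → ℂ} {C : ℝ}
    (ha : ∀ n, ‖a n‖ ≤ C) :
    ∑' k, q ^ k * ∑' n, (q ^ (k + 1)) ^ n * a n = ∑' n, q ^ n * a n / (1 - q ^ (n + 1)) := by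
  set f : ℕ → ℕ → ℂ := fun k n => q ^ k * ((q ^ (k + 1)) ^ n * a n)
  have hgeom : Summable (‖q‖ ^ ·) := summable_geometric_of_lt_one (norm_nonneg q) hq
  have hC : 0 ≤ C := (norm_nonneg _).trans (ha 0)
  have hsummable : Summable (Function.uncurry f) := by
    refine .of_norm_bounded (hgeom.mul_of_nonneg (hgeom.mul_left C) (fun k => by positivity)
      fun n => by positivity) fun ⟨k, n⟩ => ?_
    simp only [f, Function.uncurry_apply_pair, norm_mul, norm_pow, ← pow_mul]
    rw [mul_comm C]
    gcongr ‖q‖ ^ k * ?_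
    exact mul_le_mul (pow_le_pow_of_le_one (norm_nonneg q) hq.le
      (Nat.le_mul_of_pos_left n k.succ_pos)) (ha n) (norm_nonneg _) (by positivity)
  have hinner (n : ℕ) : ∑' k, f k n = q ^ n * a n / (1 - q ^ (n + 1)) := by
    have hnorm : ‖q ^ (n + 1)‖ < 1 := by
      rw [norm_pow]; exact pow_lt_one₀ (norm_nonneg q) hq n.succ_ne_zero
    calc ∑' k, f k n = ∑' k, (q ^ (n + 1)) ^ k * (q ^ n * a n) := by
          congr 1; ext k; simp only [f, ← pow_mul]; ring
      _ = q ^ n * a n / (1 - q ^ (n + 1)) := by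
          rw [tsum_mul_right, tsum_geometric_of_norm_lt_one hnorm]; ring
  simp_rw [← tsum_mul_left]
  rw [← tsum_congr hinner]
  exact hsummable.tsum_comm.symm

lemma jacksonIntegral_Gq_mul {q : ℝ} (hq : |q| < 1) (y : ℂ) :
    jacksonIntegral q (fun t => Gq q y (q * t)) =
      (1 - q) * ∑' n, (q : ℂ) ^ n * qPoch q y n / (1 - (q : ℂ) ^ (n + 1)) := by
  have hq' : ‖(q : ℂ)‖ < 1 := by rwa [Complex.norm_real, Real.norm_eq_abs]
  rw [jacksonIntegral, ← tsum_pow_mul_tsum_pow_succ_mul hq' (norm_qPoch_le hq' y)]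
  congr 2 with k
  rw [Gq, ← pow_succ', mul_comm]

theorem qlog_qintegral_representation (q : ℝ) (hq0 : 0 < q) (hq1 : q < 1) (x : ℂ) :
    Sq q x = -((q : ℂ) * (1 - x) / (1 - (q : ℂ))) *
      jacksonIntegral q (fun t => Gq q ((q : ℂ) * x) ((q : ℂ) * t)) := by
  have hq : |q| < 1 := abs_lt.mpr ⟨by linarith, hq1⟩
  have hq_ne_one : (1 : ℂ) - q ≠ 0 := sub_ne_zero.mpr (by exact_mod_cast hq1.ne')
  rw [jacksonIntegral_Gq_mul hq, Sq, neg_mul, neg_inj, ← mul_assoc, div_mul_cancel₀ _ hq_ne_one,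
    ← tsum_mul_left]
  congr 1 with n
  rw [qPoch_succ]
  ring
end

section
/- For 0 < q < 1 and every integer ℓ ≥ 1: ∑_{n=1}^∞ ((q;q)_{n-1}/(q^{ℓ+1};q)_n)·q^{nℓ} = q^ℓ/(1-q^ℓ). -/
/-!
With `x = q^ℓ`, the `n`-th term is `c n - c (n + 1)` for
`c n = (q;q)_n / (q x;q)_n · x^n · x / (1 - x)`, so the series telescopes to `c 0 = x / (1 - x)`;
the tail `c n` tends to `0` because `(q;q)_n ≤ (q x;q)_n`.
-/

open Finset Filter Topology

def qPochhammer {R : Type*} [CommRing R] (a q : R) (n : ℕ) : R :=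
  ∏ j ∈ range n, (1 - a * q ^ j)

section Algebra

variable {R : Type*} [CommRing R] (a q : R)

@[simp]
lemma qPochhammer_zero : qPochhammer a q 0 = 1 := prod_range_zero _

lemma qPochhammer_succ (n : ℕ) :
    qPochhammer a q (n + 1) = qPochhammer a q n * (1 - a * q ^ n) :=
  prod_range_succ _ n

end Algebra

section Real

variable {a b q : ℝ}

lemma qPochhammer_pos (ha0 : 0 ≤ a) (ha1 : a < 1) (hq0 : 0 ≤ q) (hq1 : q ≤ 1) (n : ℕ) :
    0 < qPochhammer a q n :=
  prod_pos fun j _ => by nlinarith [pow_le_one₀ hq0 hq1 (n := j)]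

lemma qPochhammer_le_qPochhammer (ha0 : 0 ≤ a) (hab : a ≤ b) (hb1 : b ≤ 1) (hq0 : 0 ≤ q)
    (hq1 : q ≤ 1) (n : ℕ) : qPochhammer b q n ≤ qPochhammer a q n := by
  refine prod_le_prod (fun j _ => ?_) (fun j _ => ?_) <;>
    nlinarith [pow_le_one₀ hq0 hq1 (n := j), pow_nonneg hq0 j]

end Real

lemma qPochhammer_telescope {K : Type*} [Field K] {q x : K} (hx : x ≠ 1) {n : ℕ}
    (hn : qPochhammer (q * x) q (n + 1) ≠ 0) :
    qPochhammer q q n / qPochhammer (q * x) q (n + 1) * x ^ (n + 1) =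
      qPochhammer q q n / qPochhammer (q * x) q n * x ^ n * (x / (1 - x)) -
        qPochhammer q q (n + 1) / qPochhammer (q * x) q (n + 1) * x ^ (n + 1) * (x / (1 - x)) := by
  rw [qPochhammer_succ] at hn
  have h1x : 1 - x ≠ 0 := sub_ne_zero.mpr hx.symm
  have hQ := left_ne_zero_of_mul hn
  have hf := right_ne_zero_of_mul hn
  simp only [qPochhammer_succ]
  field_simp
  ring

lemma hasSum_sub_succ_of_antitone {c : ℕ → ℝ} {l : ℝ} (hc : Antitone c)
    (hlim : Tendsto c atTop (𝓝 l)) : HasSum (fun n => c n - c (n + 1)) (c 0 - l) := by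
  rw [hasSum_iff_tendsto_nat_of_nonneg (fun n => sub_nonneg.mpr (hc n.le_succ))]
  simp only [sum_range_sub']
  exact tendsto_const_nhds.sub hlim

theorem hasSum_qPochhammer_div {q x : ℝ} (hq0 : 0 ≤ q) (hq1 : q < 1) (hx0 : 0 ≤ x)
    (hx1 : x < 1) :
    HasSum (fun n => qPochhammer q q n / qPochhammer (q * x) q (n + 1) * x ^ (n + 1))
      (x / (1 - x)) := by
  set c : ℕ → ℝ := fun n =>
    qPochhammer q q n / qPochhammer (q * x) q n * x ^ n * (x / (1 - x))
  have hqx0 : 0 ≤ q * x := mul_nonneg hq0 hx0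
  have hqxq : q * x ≤ q := mul_le_of_le_one_right hq0 hx1.le
  have hP (n : ℕ) : 0 < qPochhammer q q n := qPochhammer_pos hq0 hq1 hq0 hq1.le n
  have hQ (n : ℕ) : 0 < qPochhammer (q * x) q n :=
    qPochhammer_pos hqx0 (hqxq.trans_lt hq1) hq0 hq1.le n
  have hterm (n : ℕ) : qPochhammer q q n / qPochhammer (q * x) q (n + 1) * x ^ (n + 1) =
      c n - c (n + 1) :=
    qPochhammer_telescope hx1.ne (hQ (n + 1)).ne'
  have hc0 (n : ℕ) : 0 ≤ c n := by
    have := hP n; have := hQ n; have := sub_pos.mpr hx1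
    positivity
  have hc_le (n : ℕ) : c n ≤ x ^ n * (x / (1 - x)) := by
    have hratio : qPochhammer q q n / qPochhammer (q * x) q n ≤ 1 :=
      (div_le_one (hQ n)).mpr (qPochhammer_le_qPochhammer hqx0 hqxq hq1.le hq0 hq1.le n)
    have := sub_pos.mpr hx1
    exact mul_le_mul_of_nonneg_right (mul_le_of_le_one_left (by positivity) hratio)
      (by positivity)
  have hlim : Tendsto c atTop (𝓝 0) := by
    refine squeeze_zero hc0 hc_le ?_
    simpa using (tendsto_pow_atTop_nhds_zero_of_lt_one hx0 hx1).mul_const (x / (1 - x))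
  have hanti : Antitone c := antitone_nat_of_succ_le fun n => by
    rw [← sub_nonneg, ← hterm]
    have := hP n; have := hQ (n + 1)
    positivity
  simpa [funext hterm, c] using hasSum_sub_succ_of_antitone hanti hlim

theorem qGauss_summation_consequence (q : ℝ) (hq0 : 0 < q) (hq1 : q < 1)
    (l : ℕ) (hl : 1 ≤ l) :
    ∑' n : ℕ, (∏ j ∈ Finset.range n, (1 - q ^ (j + 1))) /
        (∏ j ∈ Finset.range (n + 1), (1 - q ^ (l + 1) * q ^ j)) * q ^ ((n + 1) * l)
      = q ^ l / (1 - q ^ l) := by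
  have hql : q ^ l < 1 := pow_lt_one₀ hq0.le hq1 (by omega)
  have := (hasSum_qPochhammer_div hq0.le hq1 (pow_nonneg hq0.le l) hql).tsum_eq
  simpa only [qPochhammer, ← pow_succ', ← pow_mul'] using this
end
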